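/- For the cube Q_δ = (0,δ)^d ⊂ ℝ^d and all λ > 0, the Dirichlet and Neumann eigenvalue counting functions satisfy |N(Q_δ, λ) − C_{d,W}(δλ)^d| ≤ C_{d,1}((δλ)^{d−1} + 1), where C_{d,W} = (2π)^{−d}ω_d, C_{d,1} = Σ_{n=0}^{d−1} (n!(d−n)!/d!)·C_{n,W} with C_{0,W} = 1, and N is either N_D (number of Dirichlet eigenvalues < λ²) or N_N (number of Neumann eigenvalues < λ²). -/

import Mathlib

open MeasureTheory Real
open scoped ENNReal

/-- The Weyl constant `C_{n,W} = (2π)^{−n}·ω_n`, where `ω_n` is the volume of the unit ball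
in `ℝ^n` (for `n = 0` this equals `1`). -/
noncomputable def weylConst (n : ℕ) : ℝ :=
  ((2 * π) ^ n)⁻¹ * (volume (Metric.ball (0 : EuclideanSpace ℝ (Fin n)) 1)).toReal

/-- `C_{d,1} = Σ_{n=0}^{d−1} (n!(d−n)!/d!)·C_{n,W}`. -/
noncomputable def weylRemConst (d : ℕ) : ℝ :=
  ∑ n ∈ Finset.range d,
    ((n.factorial : ℝ) * ((d - n).factorial : ℝ) / (d.factorial : ℝ)) * weylConst n

/-- Dirichlet counting function of the cube `(0,δ)^d` at `λ`, with `r = δλ`: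
`N_D = #{k ∈ ℤ_{≥1}^d : π|k| < δλ}`. -/
noncomputable def cubeCountD (d : ℕ) (r : ℝ) : ℕ :=
  Nat.card {k : Fin d → ℕ // (∀ i, 1 ≤ k i) ∧ π ^ 2 * (∑ i, ((k i : ℝ)) ^ 2) < r ^ 2}

/-- Neumann counting function of the cube `(0,δ)^d` at `λ`, with `r = δλ`:
`N_N = #{k ∈ ℤ_{≥0}^d : π|k| < δλ}`. -/
noncomputable def cubeCountN (d : ℕ) (r : ℝ) : ℕ :=
  Nat.card {k : Fin d → ℕ // π ^ 2 * (∑ i, ((k i : ℝ)) ^ 2) < r ^ 2}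

namespace WeylAux

open Finset

/-- Dirichlet lattice set. -/
def SD (n : ℕ) (ρ : ℝ) : Set (Fin n → ℕ) :=
  {k | (∀ i, 1 ≤ k i) ∧ ∑ i, ((k i : ℝ)) ^ 2 < ρ ^ 2}

/-- Neumann lattice set. -/
def SN (n : ℕ) (ρ : ℝ) : Set (Fin n → ℕ) :=
  {k | ∑ i, ((k i : ℝ)) ^ 2 < ρ ^ 2}

/-- Octant piece of the ball of radius `ρ`. -/
def Bset (n : ℕ) (ρ : ℝ) : Set (Fin n → ℝ) :=
  {x | (∀ i, 0 ≤ x i) ∧ ∑ i, (x i) ^ 2 < ρ ^ 2}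

lemma sq_le_sum {n : ℕ} (k : Fin n → ℝ) (hk : ∀ i, 0 ≤ k i) (i : Fin n) :
    (k i) ^ 2 ≤ ∑ j, (k j) ^ 2 :=
  Finset.single_le_sum (f := fun j => (k j)^2) (fun j _ => sq_nonneg _) (mem_univ i)

lemma SN_finite (n : ℕ) (ρ : ℝ) : (SN n ρ).Finite := by
  apply Set.Finite.subset (Set.Finite.pi (fun _ : Fin n => Set.finite_Iic ⌊|ρ|⌋₊))
  intro k hk
  have hk2 : ∑ j, ((k j : ℝ)) ^ 2 < ρ ^ 2 := hk
  have hk' : ∀ i, (k i : ℝ) ^ 2 < ρ ^ 2 := by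
    intro i
    refine lt_of_le_of_lt ?_ hk2
    exact Finset.single_le_sum (f := fun j => ((k j : ℝ)) ^ 2) (fun j _ => sq_nonneg _)
      (Finset.mem_univ i)
  intro i _
  have h1 : (k i : ℝ) ≤ |ρ| := by
    nlinarith [hk' i, sq_abs ρ, abs_nonneg ρ, (Nat.cast_nonneg (k i) : (0:ℝ) ≤ (k i : ℝ))]
  exact Nat.le_floor h1

lemma SD_finite (n : ℕ) (ρ : ℝ) : (SD n ρ).Finite :=
  (SN_finite n ρ).subset (fun _ hk => hk.2)


/-- Lower box of a lattice point. -/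
def boxD {n : ℕ} (k : Fin n → ℕ) : Set (Fin n → ℝ) :=
  Set.pi Set.univ fun i => Set.Ico ((k i : ℝ) - 1) (k i)

/-- Upper box of a lattice point. -/
def boxN {n : ℕ} (k : Fin n → ℕ) : Set (Fin n → ℝ) :=
  Set.pi Set.univ fun i => Set.Ico (k i : ℝ) ((k i : ℝ) + 1)

lemma volume_boxD {n : ℕ} (k : Fin n → ℕ) : volume (boxD k) = 1 := by
  rw [boxD, volume_pi_pi]
  simp [Real.volume_Ico]

lemma volume_boxN {n : ℕ} (k : Fin n → ℕ) : volume (boxN k) = 1 := by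
  rw [boxN, volume_pi_pi]
  simp [Real.volume_Ico]

lemma measurable_boxD {n : ℕ} (k : Fin n → ℕ) : MeasurableSet (boxD k) :=
  MeasurableSet.univ_pi fun _ => measurableSet_Ico

lemma card_SD_le_volume (n : ℕ) (ρ : ℝ) :
    (Nat.card (SD n ρ) : ℝ≥0∞) ≤ volume (Bset n ρ) := by
  classical
  have hfin := SD_finite n ρ
  have hdisj : (↑hfin.toFinset : Set (Fin n → ℕ)).PairwiseDisjoint boxD := by
    intro k _ k' _ hne
    rw [Function.onFun, Set.disjoint_left]
    intro x hx hx'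
    apply hne
    funext i
    have h1 : (k i : ℝ) - 1 ≤ x i ∧ x i < k i := hx i (Set.mem_univ i)
    have h2 : (k' i : ℝ) - 1 ≤ x i ∧ x i < k' i := hx' i (Set.mem_univ i)
    have a1 : (k i : ℝ) < (k' i : ℝ) + 1 := by linarith [h1.1, h1.2, h2.1, h2.2]
    have a2 : (k' i : ℝ) < (k i : ℝ) + 1 := by linarith [h1.1, h1.2, h2.1, h2.2]
    have b1 : k i < k' i + 1 := by exact_mod_cast a1
    have b2 : k' i < k i + 1 := by exact_mod_cast a2
    omega
  have hsub : ∀ k ∈ hfin.toFinset, boxD k ⊆ Bset n ρ := by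
    intro k hk x hx
    rw [Set.Finite.mem_toFinset] at hk
    obtain ⟨hk1, hk2⟩ := hk
    have hxi : ∀ i, 0 ≤ x i ∧ x i ≤ (k i : ℝ) := by
      intro i
      have h1 : (k i : ℝ) - 1 ≤ x i ∧ x i < k i := hx i (Set.mem_univ i)
      have : (1 : ℝ) ≤ k i := by exact_mod_cast hk1 i
      exact ⟨by linarith [h1.1], le_of_lt h1.2⟩
    refine ⟨fun i => (hxi i).1, lt_of_le_of_lt ?_ hk2⟩
    exact Finset.sum_le_sum fun i _ =>
      pow_le_pow_left₀ (hxi i).1 (hxi i).2 2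
  calc (Nat.card (SD n ρ) : ℝ≥0∞) = ∑ k ∈ hfin.toFinset, volume (boxD k) := by
        simp only [volume_boxD, Finset.sum_const, nsmul_eq_mul, mul_one]
        congr 1
        rw [Nat.card_coe_set_eq, Set.ncard_eq_toFinset_card _ hfin]
    _ = volume (⋃ k ∈ hfin.toFinset, boxD k) :=
        (measure_biUnion_finset hdisj fun k _ => measurable_boxD k).symm
    _ ≤ volume (Bset n ρ) := measure_mono (Set.iUnion₂_subset hsub)

lemma volume_le_card_SN (n : ℕ) (ρ : ℝ) :
    volume (Bset n ρ) ≤ (Nat.card (SN n ρ) : ℝ≥0∞) := by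
  classical
  have hfin := SN_finite n ρ
  have hsub : Bset n ρ ⊆ ⋃ k ∈ hfin.toFinset, boxN k := by
    rintro x ⟨hx0, hxs⟩
    refine Set.mem_iUnion₂.mpr ⟨fun i => ⌊x i⌋₊, ?_, ?_⟩
    · rw [Set.Finite.mem_toFinset]
      refine lt_of_le_of_lt ?_ hxs
      refine Finset.sum_le_sum fun i _ => ?_
      exact pow_le_pow_left₀ (Nat.cast_nonneg _) (Nat.floor_le (hx0 i)) 2
    · intro i _
      exact ⟨Nat.floor_le (hx0 i), Nat.lt_floor_add_one (x i)⟩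
  calc volume (Bset n ρ) ≤ volume (⋃ k ∈ hfin.toFinset, boxN k) := measure_mono hsub
    _ ≤ ∑ k ∈ hfin.toFinset, volume (boxN k) := measure_biUnion_finset_le _ _
    _ = (Nat.card (SN n ρ) : ℝ≥0∞) := by
        simp only [volume_boxN, Finset.sum_const, nsmul_eq_mul, mul_one]
        congr 1
        rw [Nat.card_coe_set_eq, Set.ncard_eq_toFinset_card _ hfin]

lemma volume_Bset_le (n : ℕ) (ρ : ℝ) (hρ : 0 < ρ) :
    volume (Bset n ρ) ≤ ENNReal.ofReal ρ ^ n := by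
  have hsub : Bset n ρ ⊆ Set.pi Set.univ fun _ : Fin n => Set.Ico (0:ℝ) ρ := by
    rintro x ⟨hx0, hxs⟩ i _
    refine ⟨hx0 i, ?_⟩
    have h1 : (x i) ^ 2 < ρ ^ 2 := lt_of_le_of_lt (sq_le_sum x hx0 i) hxs
    nlinarith [hx0 i]
  refine le_trans (measure_mono hsub) ?_
  rw [volume_pi_pi]
  simp [Real.volume_Ico]


lemma volume_Bset (n : ℕ) (hn : 1 ≤ n) (ρ : ℝ) (hρ : 0 < ρ) :
    (2 ^ n : ℝ≥0∞) * volume (Bset n ρ) =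
      ENNReal.ofReal (ρ ^ n) * volume (Metric.ball (0 : EuclideanSpace ℝ (Fin n)) 1) := by
  classical
  obtain ⟨m, rfl⟩ : ∃ m, n = m + 1 := ⟨n - 1, (Nat.succ_pred_eq_of_pos hn).symm⟩
  set n := m + 1
  set S : Set (Fin n → ℝ) := {x | ∑ i, (x i) ^ 2 < ρ ^ 2} with hS
  have hmeas_sum : Measurable fun x : Fin n → ℝ => ∑ i, (x i) ^ 2 :=
    Finset.measurable_sum _ fun i _ => (measurable_pi_apply i).pow_const 2
  have hSmeas : MeasurableSet S := measurableSet_lt hmeas_sum measurable_const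
  set O : Set (Fin n → ℝ) := {x | ∀ i, 0 < x i} with hO
  have hOmeas : MeasurableSet O := by
    have : O = ⋂ i, {x : Fin n → ℝ | 0 < x i} := by
      ext x; simp [hO, Set.mem_iInter]
    rw [this]
    exact MeasurableSet.iInter fun i => measurableSet_lt measurable_const (measurable_pi_apply i)
  -- volume of S equals the volume of the euclidean ball of radius ρ
  have hSvol : volume S =
      ENNReal.ofReal (ρ ^ n) * volume (Metric.ball (0 : EuclideanSpace ℝ (Fin n)) 1) := by
    have hp := EuclideanSpace.volume_preserving_symm_measurableEquiv_toLp (Fin n)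
    have hpre : (MeasurableEquiv.toLp 2 (Fin n → ℝ)).symm ⁻¹' S
        = Metric.ball (0 : EuclideanSpace ℝ (Fin n)) ρ := by
      ext x
      simp only [Set.mem_preimage, Metric.mem_ball, dist_zero_right, hS, Set.mem_setOf_eq]
      rw [EuclideanSpace.norm_eq, Real.sqrt_lt' hρ]
      constructor
      · intro h; convert h using 1; exact Finset.sum_congr rfl fun i _ => by
          rw [Real.norm_eq_abs, sq_abs]; rfl
      · intro h; convert h using 1; exact Finset.sum_congr rfl fun i _ => by
          rw [Real.norm_eq_abs, sq_abs]; rfl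
    have := hp.measure_preimage hSmeas.nullMeasurableSet
    rw [hpre] at this
    rw [← this, Measure.addHaar_ball _ _ hρ.le, finrank_euclideanSpace_fin]
  -- null sets
  have hnull : volume {x : Fin n → ℝ | ∃ i, x i = 0} = 0 := by
    have h1 : {x : Fin n → ℝ | ∃ i, x i = 0} = ⋃ i, {x : Fin n → ℝ | x i = 0} := by
      ext x; simp
    rw [h1, volume_pi]
    exact measure_iUnion_null fun i => Measure.pi_hyperplane _ i 0
  -- reflections
  set R : (Fin n → Bool) → (Fin n → ℝ) → (Fin n → ℝ) :=
    fun s x i => if s i then -x i else x i with hR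
  have hRmp : ∀ s, MeasurePreserving (R s) volume volume := by
    intro s
    apply volume_preserving_pi (f := fun i (t : ℝ) => if s i then -t else t)
    intro i
    cases hsi : s i
    · simp [hsi]; exact MeasurePreserving.id _
    · simpa [hsi] using Measure.measurePreserving_neg (volume : Measure ℝ)
  have hRsum : ∀ s x, ∑ i, (R s x i) ^ 2 = ∑ i, (x i) ^ 2 := by
    intro s x
    refine Finset.sum_congr rfl fun i _ => ?_
    by_cases hsi : s i <;> simp [hR, hsi]
  -- decomposition of S minus hyperplanes
  have hcover : S ∩ {x | ∀ i, x i ≠ 0} = ⋃ s : Fin n → Bool, R s ⁻¹' (S ∩ O) := by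
    ext x
    constructor
    · rintro ⟨hxS, hx0⟩
      refine Set.mem_iUnion.mpr ⟨fun i => decide (x i < 0), ?_, ?_⟩
      · have h2 : ∑ i, (R (fun j => decide (x j < 0)) x i) ^ 2 < ρ ^ 2 := by
          rw [hRsum]; exact hxS
        exact h2
      · intro i
        show (0 : ℝ) < if decide (x i < 0) then -x i else x i
        rcases lt_trichotomy (x i) 0 with h | h | h
        · simp [h]
        · exact absurd h (hx0 i)
        · simp [not_lt.mpr h.le, h]
    · rintro hx
      obtain ⟨s, hx⟩ := Set.mem_iUnion.mp hx
      obtain ⟨hxS, hxO⟩ := hx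
      constructor
      · show ∑ i, (x i) ^ 2 < ρ ^ 2
        rw [← hRsum s]; exact hxS
      · intro i hxi
        have := hxO i
        show False
        by_cases hsi : s i <;> simp [hR, hsi, hxi] at this
  have hdisj : Pairwise (Function.onFun Disjoint fun s : Fin n → Bool => R s ⁻¹' (S ∩ O)) := by
    intro s t hst
    rw [Function.onFun, Set.disjoint_left]
    intro x hxs hxt
    apply hst
    funext i
    have h1 : (0 : ℝ) < if s i then -x i else x i := hxs.2 i
    have h2 : (0 : ℝ) < if t i then -x i else x i := hxt.2 i
    by_cases hsi : s i <;> by_cases hti : t i <;>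
      simp [hsi, hti] at h1 h2 ⊢ <;> linarith
  have hSOmeas : MeasurableSet (S ∩ O) := hSmeas.inter hOmeas
  -- each reflected copy has the same volume
  have hvols : ∀ s, volume (R s ⁻¹' (S ∩ O)) = volume (S ∩ O) := fun s =>
    (hRmp s).measure_preimage hSOmeas.nullMeasurableSet
  -- putting it together
  have hSU : volume S = volume (S ∩ {x | ∀ i, x i ≠ 0}) := by
    have hsplit : S = (S ∩ {x | ∀ i, x i ≠ 0}) ∪ (S ∩ {x : Fin n → ℝ | ∃ i, x i = 0}) := by
      ext x
      constructor
      · intro hx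
        by_cases h : ∀ i, x i ≠ 0
        · exact Or.inl ⟨hx, h⟩
        · push_neg at h
          exact Or.inr ⟨hx, h⟩
      · rintro (⟨hx, _⟩ | ⟨hx, _⟩) <;> exact hx
    calc volume S
        = volume ((S ∩ {x | ∀ i, x i ≠ 0}) ∪ (S ∩ {x : Fin n → ℝ | ∃ i, x i = 0})) := by
          rw [← hsplit]
      _ = volume (S ∩ {x | ∀ i, x i ≠ 0}) := by
          apply le_antisymm
          · refine le_trans (measure_union_le _ _) ?_
            have h0 : volume (S ∩ {x : Fin n → ℝ | ∃ i, x i = 0}) = 0 :=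
              measure_mono_null Set.inter_subset_right hnull
            simp [h0]
          · exact measure_mono Set.subset_union_left
  have hcnt : volume (⋃ s : Fin n → Bool, R s ⁻¹' (S ∩ O))
      = (2 ^ n : ℝ≥0∞) * volume (S ∩ O) := by
    rw [measure_iUnion hdisj fun s => (hRmp s).measurable hSOmeas]
    rw [tsum_fintype]
    simp only [hvols, Finset.sum_const, Finset.card_univ]
    rw [Fintype.card_fun]
    simp [nsmul_eq_mul, Fintype.card_fin, Fintype.card_bool]
  -- finally identify Bset with S ∩ O up to null sets
  have hBO : volume (Bset n ρ) = volume (S ∩ O) := by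
    apply le_antisymm
    · have hsub : Bset n ρ ⊆ (S ∩ O) ∪ {x : Fin n → ℝ | ∃ i, x i = 0} := by
        rintro x ⟨hx0, hxs⟩
        by_cases h : ∀ i, x i ≠ 0
        · exact Or.inl ⟨hxs, fun i => lt_of_le_of_ne (hx0 i) (Ne.symm (h i))⟩
        · push_neg at h
          exact Or.inr h
      refine le_trans (measure_mono hsub) ?_
      refine le_trans (measure_union_le _ _) ?_
      simp [hnull]
    · apply measure_mono
      rintro x ⟨hxS, hxO⟩
      exact ⟨fun i => (hxO i).le, hxS⟩
  rw [hBO, ← hcnt, ← hcover, ← hSU, hSvol]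


lemma volume_Bset_ne_top (n : ℕ) (ρ : ℝ) (hρ : 0 < ρ) : volume (Bset n ρ) ≠ ⊤ :=
  ne_top_of_le_ne_top (ENNReal.pow_ne_top ENNReal.ofReal_ne_top) (volume_Bset_le n ρ hρ)

lemma volume_Bset_toReal (n : ℕ) (hn : 1 ≤ n) (ρ : ℝ) (hρ : 0 < ρ) :
    (2 : ℝ) ^ n * (volume (Bset n ρ)).toReal =
      ρ ^ n * (volume (Metric.ball (0 : EuclideanSpace ℝ (Fin n)) 1)).toReal := by
  have h := congrArg ENNReal.toReal (volume_Bset n hn ρ hρ)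
  rwa [ENNReal.toReal_mul, ENNReal.toReal_mul, ENNReal.toReal_pow, ENNReal.toReal_ofNat,
    ENNReal.toReal_ofReal (by positivity)] at h

lemma card_SD_le_volume_real (n : ℕ) (ρ : ℝ) (hρ : 0 < ρ) :
    (Nat.card (SD n ρ) : ℝ) ≤ (volume (Bset n ρ)).toReal := by
  have := ENNReal.toReal_mono (volume_Bset_ne_top n ρ hρ) (card_SD_le_volume n ρ)
  simpa using this

lemma volume_real_le_card_SN (n : ℕ) (ρ : ℝ) :
    (volume (Bset n ρ)).toReal ≤ (Nat.card (SN n ρ) : ℝ) := by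
  have := ENNReal.toReal_mono (ENNReal.natCast_ne_top _) (volume_le_card_SN n ρ)
  simpa using this

lemma card_SD_le_pow (n : ℕ) (ρ : ℝ) (hρ : 0 < ρ) :
    (Nat.card (SD n ρ) : ℝ) ≤ ρ ^ n := by
  refine le_trans (card_SD_le_volume_real n ρ hρ) ?_
  have := ENNReal.toReal_mono (ENNReal.pow_ne_top ENNReal.ofReal_ne_top)
    (volume_Bset_le n ρ hρ)
  rwa [ENNReal.toReal_pow, ENNReal.toReal_ofReal hρ.le] at this

lemma card_SD_zero_dim (ρ : ℝ) (hρ : 0 < ρ) : Nat.card (SD 0 ρ) = 1 := by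
  have h : SD 0 ρ = Set.univ := by
    ext k
    simp only [SD, Set.mem_setOf_eq, Set.mem_univ, iff_true]
    exact ⟨fun i => i.elim0, by simpa using pow_pos hρ 2⟩
  rw [h]
  simp [Nat.card_congr (Equiv.Set.univ _)]

lemma card_SD_small (n : ℕ) (hn : 1 ≤ n) (ρ : ℝ) (hρ0 : 0 ≤ ρ) (hρ : ρ ≤ 1) :
    Nat.card (SD n ρ) = 0 := by
  have h : SD n ρ = ∅ := by
    ext k
    simp only [SD, Set.mem_setOf_eq, Set.mem_empty_iff_false, iff_false, not_and]
    intro hk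
    have h1 : (n : ℝ) ≤ ∑ i, ((k i : ℝ)) ^ 2 := by
      calc (n : ℝ) = ∑ _i : Fin n, (1 : ℝ) := by simp
        _ ≤ ∑ i, ((k i : ℝ)) ^ 2 := by
            refine Finset.sum_le_sum fun i _ => ?_
            have : (1 : ℝ) ≤ (k i : ℝ) := by exact_mod_cast hk i
            nlinarith
    have h2 : ρ ^ 2 ≤ 1 := by nlinarith [hρ0, hρ]
    have h3 : (1 : ℝ) ≤ (n : ℝ) := by exact_mod_cast hn
    linarith
  rw [h]
  simp


/-- Order-free identification of a finset with `Fin` of its cardinality. -/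
noncomputable def finsetEquivFin {d : ℕ} (S : Finset (Fin d)) : ↥S ≃ Fin S.card :=
  Fintype.equivFinOfCardEq (Fintype.card_coe S)

lemma sum_sq_supp {d : ℕ} (k : Fin d → ℕ) (S : Finset (Fin d))
    (hS : ∀ i, i ∈ S ↔ 1 ≤ k i) :
    ∑ j : Fin S.card, ((k ((finsetEquivFin S).symm j : Fin d) : ℝ)) ^ 2
      = ∑ i, ((k i : ℝ)) ^ 2 := by
  have h1 : ∑ j : Fin S.card, ((k ((finsetEquivFin S).symm j : Fin d) : ℝ)) ^ 2
      = ∑ i : ↥S, ((k i.1 : ℝ)) ^ 2 :=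
    Equiv.sum_comp (finsetEquivFin S).symm (fun i : ↥S => ((k i.1 : ℝ)) ^ 2)
  have h2 : ∑ i : ↥S, ((k i.1 : ℝ)) ^ 2 = ∑ i ∈ S, ((k i : ℝ)) ^ 2 :=
    Finset.sum_coe_sort S (fun i => ((k i : ℝ)) ^ 2)
  rw [h1, h2]
  refine Finset.sum_subset (Finset.subset_univ S) ?_
  intro i _ hi
  have hk0 : k i = 0 := by
    by_contra h
    exact hi ((hS i).mpr (Nat.one_le_iff_ne_zero.mpr h))
  simp [hk0]


noncomputable def fiberEquiv (d : ℕ) (ρ : ℝ) (S : Finset (Fin d)) :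
    {k : ↥(SN d ρ) // (Finset.univ.filter fun i => 1 ≤ k.1 i) = S} ≃ ↥(SD S.card ρ) := by
  classical
  refine
    { toFun := fun p => ⟨fun j => p.1.1 ((finsetEquivFin S).symm j : Fin d), ?_⟩
      invFun := fun m => ⟨⟨fun i => if h : i ∈ S then m.1 (finsetEquivFin S ⟨i, h⟩) else 0, ?_⟩, ?_⟩
      left_inv := ?_
      right_inv := ?_ }
  · -- toFun membership
    have hS : ∀ i, i ∈ S ↔ 1 ≤ p.1.1 i := by
      intro i; conv_lhs => rw [← p.2]
      simp
    constructor
    · intro j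
      exact (hS _).mp ((finsetEquivFin S).symm j).2
    · rw [sum_sq_supp p.1.1 S hS]
      exact p.1.2
  · -- invFun value in SN
    have hk : ∀ j : Fin S.card,
        (if h : ((finsetEquivFin S).symm j : Fin d) ∈ S
          then m.1 (finsetEquivFin S ⟨((finsetEquivFin S).symm j : Fin d), h⟩) else 0) = m.1 j := by
      intro j
      rw [dif_pos ((finsetEquivFin S).symm j).2]
      congr 1
      rw [Subtype.coe_eta, Equiv.apply_symm_apply]
    have hS : ∀ i, i ∈ S ↔
        1 ≤ (if h : i ∈ S then m.1 (finsetEquivFin S ⟨i, h⟩) else 0) := by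
      intro i
      constructor
      · intro h; rw [dif_pos h]; exact m.2.1 _
      · intro h
        by_contra hi
        rw [dif_neg hi] at h
        omega
    show (∑ i, (((if h : i ∈ S then m.1 (finsetEquivFin S ⟨i, h⟩) else 0 : ℕ) : ℝ)) ^ 2) < ρ ^ 2
    rw [← sum_sq_supp _ S hS]
    have : ∀ j : Fin S.card, (((if h : ((finsetEquivFin S).symm j : Fin d) ∈ S
          then m.1 (finsetEquivFin S ⟨((finsetEquivFin S).symm j : Fin d), h⟩) else 0 : ℕ) : ℝ)) ^ 2
        = ((m.1 j : ℝ)) ^ 2 := by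
      intro j; rw [hk j]
    rw [Finset.sum_congr rfl fun j _ => this j]
    exact m.2.2
  · -- filter = S
    ext i
    simp only [Finset.mem_filter, Finset.mem_univ, true_and]
    constructor
    · intro h
      by_contra hi
      rw [dif_neg hi] at h
      omega
    · intro h
      rw [dif_pos h]
      exact m.2.1 _
  · -- left inverse
    intro p
    apply Subtype.ext
    apply Subtype.ext
    funext i
    have hS : ∀ i, i ∈ S ↔ 1 ≤ p.1.1 i := by
      intro i; conv_lhs => rw [← p.2]
      simp
    show (if h : i ∈ S then p.1.1 ((finsetEquivFin S).symm (finsetEquivFin S ⟨i, h⟩) : Fin d) else 0)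
        = p.1.1 i
    by_cases h : i ∈ S
    · rw [dif_pos h, Equiv.symm_apply_apply]
    · rw [dif_neg h]
      have h0 : ¬ 1 ≤ p.1.1 i := fun hh => h ((hS i).mpr hh)
      omega
  · -- right inverse
    intro m
    apply Subtype.ext
    funext j
    show (if h : ((finsetEquivFin S).symm j : Fin d) ∈ S
        then m.1 (finsetEquivFin S ⟨((finsetEquivFin S).symm j : Fin d), h⟩) else 0) = m.1 j
    rw [dif_pos ((finsetEquivFin S).symm j).2]
    congr 1
    rw [Subtype.coe_eta, Equiv.apply_symm_apply]


lemma card_SN_eq (d : ℕ) (ρ : ℝ) :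
    Nat.card (SN d ρ) = ∑ n ∈ Finset.range (d + 1), d.choose n * Nat.card (SD n ρ) := by
  classical
  haveI : Fintype ↥(SN d ρ) := (SN_finite d ρ).fintype
  have h1 : Nat.card ↥(SN d ρ)
      = ∑ S : Finset (Fin d),
          Nat.card {k : ↥(SN d ρ) // (Finset.univ.filter fun i => 1 ≤ k.1 i) = S} := by
    rw [Nat.card_eq_fintype_card]
    rw [← Fintype.card_congr
      (Equiv.sigmaFiberEquiv fun k : ↥(SN d ρ) => Finset.univ.filter fun i => 1 ≤ k.1 i)]
    rw [Fintype.card_sigma]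
    exact Finset.sum_congr rfl fun S _ => (Nat.card_eq_fintype_card).symm
  have h2 : ∀ S : Finset (Fin d),
      Nat.card {k : ↥(SN d ρ) // (Finset.univ.filter fun i => 1 ≤ k.1 i) = S}
        = Nat.card (SD S.card ρ) := fun S => Nat.card_congr (fiberEquiv d ρ S)
  rw [h1]
  rw [Finset.sum_congr rfl fun S _ => h2 S]
  have h3 : ∑ S : Finset (Fin d), Nat.card (SD S.card ρ)
      = ∑ m ∈ (Finset.univ : Finset (Fin d)).powerset, Nat.card (SD m.card ρ) := by
    rw [Finset.powerset_univ]
  rw [h3, Finset.sum_powerset_apply_card (fun n => Nat.card (SD n ρ))]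
  simp [Finset.card_univ, smul_eq_mul]


lemma weylConst_nonneg (n : ℕ) : 0 ≤ weylConst n :=
  mul_nonneg (inv_nonneg.mpr (pow_nonneg (by positivity) n)) ENNReal.toReal_nonneg

lemma weylConst_zero : weylConst 0 = 1 := by
  rw [weylConst]
  have hball : (Metric.ball (0 : EuclideanSpace ℝ (Fin 0)) 1) = Set.univ := by
    ext x
    simp only [Metric.mem_ball, Set.mem_univ, iff_true]
    have hx : x = 0 := Subsingleton.elim x 0
    rw [hx]
    simp
  rw [hball]
  have hp := (EuclideanSpace.volume_preserving_symm_measurableEquiv_toLp (Fin 0)).measure_preimage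
    (MeasurableSet.univ.nullMeasurableSet)
  simp only [Set.preimage_univ] at hp
  rw [hp]
  simp [volume_pi, Measure.pi_univ]

lemma weylRemConst_ge_one (d : ℕ) (hd : 1 ≤ d) : 1 ≤ weylRemConst d := by
  have h0 : ((Nat.factorial 0 : ℝ) * ((d - 0).factorial : ℝ) / (d.factorial : ℝ)) * weylConst 0
      = 1 := by
    simp [weylConst_zero, Nat.factorial]
    exact Nat.factorial_ne_zero d
  calc (1 : ℝ) = ((Nat.factorial 0 : ℝ) * ((d - 0).factorial : ℝ) / (d.factorial : ℝ))
        * weylConst 0 := h0.symm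
    _ ≤ weylRemConst d := by
        refine Finset.single_le_sum (f := fun n =>
          ((n.factorial : ℝ) * ((d - n).factorial : ℝ) / (d.factorial : ℝ)) * weylConst n)
          (fun n _ => ?_) (Finset.mem_range.mpr hd)
        exact mul_nonneg (by positivity) (weylConst_nonneg n)

lemma two_pow_le_pi_pow (m : ℕ) : (2 : ℝ) ^ (m + 2) ≤ π ^ (m + 1) + 2 := by
  induction m with
  | zero =>
    have := Real.pi_gt_three
    norm_num
    linarith
  | succ m ih =>
    have hπ3 := Real.pi_gt_three
    have hp : π ≤ π ^ (m + 1) := le_self_pow₀ (by linarith) (Nat.succ_ne_zero m)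
    have key : 2 * π ^ (m + 1) + 2 ≤ π ^ (m + 2) := by
      have hmul : π ^ (m + 2) = π ^ (m + 1) * π := by ring
      nlinarith [hp, hπ3]
    calc (2 : ℝ) ^ (m + 3) = 2 * 2 ^ (m + 2) := by ring
      _ ≤ 2 * (π ^ (m + 1) + 2) := by linarith
      _ = 2 * π ^ (m + 1) + 4 := by ring
      _ ≤ π ^ (m + 2) + 2 := by linarith
    
lemma choose_sum_le (d : ℕ) (hd : 1 ≤ d) :
    (∑ n ∈ Finset.Ico 1 d, (d.choose n : ℝ)) ≤ π ^ (d - 1) := by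
  have hnat : (∑ n ∈ Finset.Ico 1 d, d.choose n) + 2 = 2 ^ d := by
    have h := Nat.sum_range_choose d
    rw [Finset.range_eq_Ico] at h
    rw [Finset.sum_eq_sum_Ico_succ_bot (by omega : 0 < d + 1)] at h
    rw [Finset.sum_Ico_succ_top (by omega : 1 ≤ d)] at h
    simp only [Nat.choose_zero_right, Nat.choose_self] at h
    omega
  have hcast : (∑ n ∈ Finset.Ico 1 d, (d.choose n : ℝ)) = (2 : ℝ) ^ d - 2 := by
    have h2 : ((∑ n ∈ Finset.Ico 1 d, d.choose n : ℕ) : ℝ) + 2 = (2 : ℝ) ^ d := by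
      exact_mod_cast congrArg (Nat.cast : ℕ → ℝ) hnat
    push_cast at h2
    linarith
  rw [hcast]
  rcases Nat.lt_or_ge d 2 with h2 | h2
  · interval_cases d
    · simp
  · obtain ⟨m, rfl⟩ : ∃ m, d = m + 2 := ⟨d - 2, by omega⟩
    have := two_pow_le_pi_pow m
    have hh : m + 2 - 1 = m + 1 := by omega
    rw [hh]
    linarith

end WeylAux

open WeylAux

/-- two-sided Weyl estimate on the cube `Q_δ = (0,δ)^d`:
`|N(Q_δ,λ) − C_{d,W}(δλ)^d| ≤ C_{d,1}((δλ)^{d−1} + 1)` for both the Dirichlet and the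
Neumann counting functions. -/
theorem weyl_cube_estimate (d : ℕ) (hd : 1 ≤ d) (δ lam : ℝ) (hδ : 0 < δ) (hlam : 0 < lam) :
    |(cubeCountD d (δ * lam) : ℝ) - weylConst d * (δ * lam) ^ d|
        ≤ weylRemConst d * ((δ * lam) ^ (d - 1) + 1) ∧
    |(cubeCountN d (δ * lam) : ℝ) - weylConst d * (δ * lam) ^ d|
        ≤ weylRemConst d * ((δ * lam) ^ (d - 1) + 1) := by
  have hπ : 0 < π := Real.pi_pos
  set r : ℝ := δ * lam with hrdef
  have hr : 0 < r := mul_pos hδ hlam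
  set ρ : ℝ := r / π with hρdef
  have hρ : 0 < ρ := div_pos hr hπ
  have hrπ : r = π * ρ := by rw [hρdef]; field_simp
  -- identify the counting functions with lattice point counts
  have hiff : ∀ k : Fin d → ℕ,
      (π ^ 2 * (∑ i, ((k i : ℝ)) ^ 2) < r ^ 2) ↔ ((∑ i, ((k i : ℝ)) ^ 2) < ρ ^ 2) := by
    intro k
    rw [hρdef, div_pow, lt_div_iff₀ (by positivity)]
    constructor <;> intro h <;> linarith
  have hD : cubeCountD d r = Nat.card (SD d ρ) := by
    apply Nat.card_congr
    apply Equiv.subtypeEquivRight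
    intro k
    exact and_congr_right fun _ => hiff k
  have hN : cubeCountN d r = Nat.card (SN d ρ) := by
    apply Nat.card_congr
    apply Equiv.subtypeEquivRight
    intro k
    exact hiff k
  set V : ℝ := (volume (Bset d ρ)).toReal with hV
  have key0 : weylConst d * r ^ d = V := by
    have h := volume_Bset_toReal d hd ρ hρ
    have h2 : (0 : ℝ) < 2 ^ d := by positivity
    apply mul_left_cancel₀ (ne_of_gt h2)
    rw [← hV] at h
    rw [h, weylConst, hrπ, mul_pow]
    have hπd : (π : ℝ) ^ d ≠ 0 := by positivity
    field_simp
    ring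
  have key1 : (Nat.card (SD d ρ) : ℝ) ≤ V := card_SD_le_volume_real d ρ hρ
  have key2 : V ≤ (Nat.card (SN d ρ) : ℝ) := volume_real_le_card_SN d ρ
  have key3 : (Nat.card (SN d ρ) : ℝ) = (Nat.card (SD d ρ) : ℝ)
      + ∑ n ∈ Finset.range d, (d.choose n : ℝ) * (Nat.card (SD n ρ) : ℝ) := by
    have h := card_SN_eq d ρ
    rw [Finset.sum_range_succ, Nat.choose_self, one_mul] at h
    rw [h]
    push_cast
    ring
  have hrem1 : (1 : ℝ) ≤ weylRemConst d := weylRemConst_ge_one d hd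
  have hpow : (0 : ℝ) ≤ r ^ (d - 1) := pow_nonneg hr.le _
  have key4 : ∑ n ∈ Finset.range d, (d.choose n : ℝ) * (Nat.card (SD n ρ) : ℝ)
      ≤ weylRemConst d * (r ^ (d - 1) + 1) := by
    have hsplit : ∑ n ∈ Finset.range d, (d.choose n : ℝ) * (Nat.card (SD n ρ) : ℝ)
        = (d.choose 0 : ℝ) * (Nat.card (SD 0 ρ) : ℝ)
          + ∑ n ∈ Finset.Ico 1 d, (d.choose n : ℝ) * (Nat.card (SD n ρ) : ℝ) := by
      rw [Finset.range_eq_Ico, Finset.sum_eq_sum_Ico_succ_bot (by omega : 0 < d)]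
    have h00 : (d.choose 0 : ℝ) * (Nat.card (SD 0 ρ) : ℝ) = 1 := by
      rw [Nat.choose_zero_right, card_SD_zero_dim ρ hρ]
      norm_num
    rw [hsplit, h00]
    by_cases hcase : r < π
    · have hρ1 : ρ ≤ 1 := by
        rw [hρdef, div_le_one hπ]
        exact hcase.le
      have hzero : ∑ n ∈ Finset.Ico 1 d, (d.choose n : ℝ) * (Nat.card (SD n ρ) : ℝ) = 0 := by
        refine Finset.sum_eq_zero fun n hn => ?_
        rw [card_SD_small n (Finset.mem_Ico.mp hn).1 ρ hρ.le hρ1]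
        norm_num
      rw [hzero]
      nlinarith
    · push_neg at hcase
      have hρ1 : (1 : ℝ) ≤ ρ := by
        rw [hρdef, le_div_iff₀ hπ]
        linarith
      have hterm : ∀ n ∈ Finset.Ico 1 d, (d.choose n : ℝ) * (Nat.card (SD n ρ) : ℝ)
          ≤ (d.choose n : ℝ) * ρ ^ (d - 1) := by
        intro n hn
        refine mul_le_mul_of_nonneg_left ?_ (Nat.cast_nonneg _)
        refine le_trans (card_SD_le_pow n ρ hρ) ?_
        have hn2 := Finset.mem_Ico.mp hn
        exact pow_le_pow_right₀ hρ1 (by omega)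
      have hsum2 : ∑ n ∈ Finset.Ico 1 d, (d.choose n : ℝ) * (Nat.card (SD n ρ) : ℝ)
          ≤ (∑ n ∈ Finset.Ico 1 d, (d.choose n : ℝ)) * ρ ^ (d - 1) := by
        rw [Finset.sum_mul]
        exact Finset.sum_le_sum hterm
      have hsum3 : (∑ n ∈ Finset.Ico 1 d, (d.choose n : ℝ)) * ρ ^ (d - 1)
          ≤ π ^ (d - 1) * ρ ^ (d - 1) := by
        refine mul_le_mul_of_nonneg_right (choose_sum_le d hd) (pow_nonneg hρ.le _)
      have hsum4 : π ^ (d - 1) * ρ ^ (d - 1) = r ^ (d - 1) := by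
        rw [← mul_pow, ← hrπ]
      nlinarith [hsum2, hsum3, hsum4, hrem1, hpow]
  rw [hD, hN, key0]
  constructor
  · rw [abs_of_nonpos (by linarith)]
    linarith
  · rw [abs_of_nonneg (by linarith)]
    linarith
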